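/- arXiv:1205.0193 — 2 statements merged into one kernel-verified Lean document; each statement's English description precedes it below -/
import Mathlib

section
/- The complete bipartite graph K_{3,2} admits a cyclically-interval 3-coloring but no interval 3-coloring; i.e., w_cyc(K_{3,2}) = 3 < 4 = w_int(K_{3,2}). -/
open SimpleGraph

/-- `Q` is a `t`-cyclic interval. -/
def IsCyclicInterval (t : ℕ) (Q : Set ℕ) : Prop :=
  ∃ i₁ ∈ Set.Icc 1 t, ∃ i₂ ∈ Set.Icc 1 t,
    Q = Set.Icc (min i₁ i₂) (max i₁ i₂) ∨
    Q = Set.Icc 1 t \ (Set.Icc (min i₁ i₂) (max i₁ i₂) \ {i₁, i₂})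

/-- A proper edge `t`-coloring: colors in `[1,t]`, adjacent edges differ, all colors used. -/
def IsProperEdgeColoring {V : Type*} (G : SimpleGraph V) (t : ℕ) (φ : Sym2 V → ℕ) : Prop :=
  (∀ e ∈ G.edgeSet, φ e ∈ Set.Icc 1 t) ∧
  (∀ e₁ ∈ G.edgeSet, ∀ e₂ ∈ G.edgeSet, e₁ ≠ e₂ → (∃ x, x ∈ e₁ ∧ x ∈ e₂) → φ e₁ ≠ φ e₂) ∧
  (∀ c ∈ Set.Icc 1 t, ∃ e ∈ G.edgeSet, φ e = c)

/-- A cyclically-interval `t`-coloring. -/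
def IsCyclicIntervalColoring {V : Type*} (G : SimpleGraph V) (t : ℕ) (φ : Sym2 V → ℕ) : Prop :=
  IsProperEdgeColoring G t φ ∧
  ∀ x : V, (G.incidenceSet x).Nonempty → IsCyclicInterval t (φ '' G.incidenceSet x)

/-- An interval `t`-coloring. -/
def IsIntervalColoring {V : Type*} (G : SimpleGraph V) (t : ℕ) (φ : Sym2 V → ℕ) : Prop :=
  IsProperEdgeColoring G t φ ∧
  ∀ x : V, (G.incidenceSet x).Nonempty → ∃ a b, φ '' G.incidenceSet x = Set.Icc a b

/-- `TP(u,v)` along a path `p`. -/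
def pathTP {V : Type*} (G : SimpleGraph V) {u v : V} (p : G.Walk u v) : Set (Sym2 V) :=
  if p.length ≤ 1 then {e | e ∈ p.edges}
  else ⋃ x ∈ {w | w ∈ p.support ∧ w ≠ u ∧ w ≠ v}, G.incidenceSet x

/-- `M(H)`: maximum of `|TP(b_i,b_j)|` over pairs of vertices. -/
noncomputable def treeM {V : Type*} (G : SimpleGraph V) : ℕ :=
  sSup {n | ∃ (u v : V) (p : G.Walk u v), p.IsPath ∧ (pathTP G p).ncard = n}

noncomputable def Wcyc {V : Type*} (G : SimpleGraph V) : ℕ :=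
  sSup {t | ∃ φ, IsCyclicIntervalColoring G t φ}

noncomputable def wcyc {V : Type*} (G : SimpleGraph V) : ℕ :=
  sInf {t | ∃ φ, IsCyclicIntervalColoring G t φ}

noncomputable def Wint {V : Type*} (G : SimpleGraph V) : ℕ :=
  sSup {t | ∃ φ, IsIntervalColoring G t φ}

noncomputable def wint {V : Type*} (G : SimpleGraph V) : ℕ :=
  sInf {t | ∃ φ, IsIntervalColoring G t φ}

/-- Chromatic index: least `n` admitting a proper edge coloring with colors in `[1,n]`. -/
noncomputable def chromIndex {V : Type*} (G : SimpleGraph V) : ℕ :=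
  sInf {n | ∃ φ : Sym2 V → ℕ, (∀ e ∈ G.edgeSet, φ e ∈ Set.Icc 1 n) ∧
    (∀ e₁ ∈ G.edgeSet, ∀ e₂ ∈ G.edgeSet, e₁ ≠ e₂ → (∃ x, x ∈ e₁ ∧ x ∈ e₂) → φ e₁ ≠ φ e₂)}



section K32Aux

abbrev K32V : Type := Fin 3 ⊕ Fin 2
abbrev K32 : SimpleGraph K32V := completeBipartiteGraph (Fin 3) (Fin 2)

instance : DecidableRel K32.Adj := fun x y =>
  inferInstanceAs (Decidable (x.isLeft ∧ y.isRight ∨ x.isRight ∧ y.isLeft))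

lemma k32_adj (a : Fin 3) (b : Fin 2) : K32.Adj (.inl a) (.inr b) := Or.inl ⟨rfl, rfl⟩

lemma k32_proper_of (φ : Sym2 K32V → ℕ) (t : ℕ)
    (h1 : ∀ x y : K32V, K32.Adj x y → φ s(x,y) ∈ Set.Icc 1 t)
    (h2 : ∀ x1 y1 x2 y2 : K32V, K32.Adj x1 y1 → K32.Adj x2 y2 → s(x1,y1) ≠ s(x2,y2) →
      (x1 = x2 ∨ x1 = y2 ∨ y1 = x2 ∨ y1 = y2) → φ s(x1,y1) ≠ φ s(x2,y2))
    (h3 : ∀ c ∈ Set.Icc 1 t, ∃ e ∈ K32.edgeSet, φ e = c) :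
    IsProperEdgeColoring K32 t φ := by
  refine ⟨?_, ?_, h3⟩
  · intro e
    induction e using Sym2.ind with
    | _ x y => intro he; exact h1 x y (K32.mem_edgeSet.mp he)
  · intro e1
    induction e1 using Sym2.ind with
    | _ x1 y1 =>
      intro he1 e2
      induction e2 using Sym2.ind with
      | _ x2 y2 =>
        intro he2 hne hsh
        obtain ⟨x, hx1, hx2⟩ := hsh
        rw [Sym2.mem_iff] at hx1 hx2
        apply h2 x1 y1 x2 y2 (K32.mem_edgeSet.mp he1) (K32.mem_edgeSet.mp he2) hne
        rcases hx1 with rfl | rfl <;> rcases hx2 with h | h <;> tauto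

lemma k32_inc_inl (a : Fin 3) :
    K32.incidenceSet (.inl a) = {s(.inl a, .inr 0), s(.inl a, .inr 1)} := by
  ext e
  induction e using Sym2.ind with
  | _ x y =>
    simp only [Set.mem_insert_iff, Set.mem_singleton_iff,
      SimpleGraph.mk'_mem_incidenceSet_iff]
    revert x y; fin_cases a <;> decide

lemma k32_inc_inr (b : Fin 2) :
    K32.incidenceSet (.inr b) =
      {s(.inl 0, .inr b), s(.inl 1, .inr b), s(.inl 2, .inr b)} := by
  ext e
  induction e using Sym2.ind with
  | _ x y =>
    simp only [Set.mem_insert_iff, Set.mem_singleton_iff,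
      SimpleGraph.mk'_mem_incidenceSet_iff]
    revert x y; fin_cases b <;> decide

lemma k32_img_inl (φ : Sym2 K32V → ℕ) (a : Fin 3) :
    φ '' K32.incidenceSet (.inl a) = {φ s(.inl a, .inr 0), φ s(.inl a, .inr 1)} := by
  rw [k32_inc_inl, Set.image_insert_eq, Set.image_singleton]

lemma k32_img_inr (φ : Sym2 K32V → ℕ) (b : Fin 2) :
    φ '' K32.incidenceSet (.inr b) =
      {φ s(.inl 0, .inr b), φ s(.inl 1, .inr b), φ s(.inl 2, .inr b)} := by
  rw [k32_inc_inr, Set.image_insert_eq, Set.image_insert_eq, Set.image_singleton]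

lemma k32_three_le {t : ℕ} {φ : Sym2 K32V → ℕ}
    (h : IsProperEdgeColoring K32 t φ) : 3 ≤ t := by
  obtain ⟨hcol, hprop, -⟩ := h
  have m0 : s((Sum.inl 0 : K32V), Sum.inr 0) ∈ K32.edgeSet := K32.mem_edgeSet.mpr (k32_adj 0 0)
  have m1 : s((Sum.inl 1 : K32V), Sum.inr 0) ∈ K32.edgeSet := K32.mem_edgeSet.mpr (k32_adj 1 0)
  have m2 : s((Sum.inl 2 : K32V), Sum.inr 0) ∈ K32.edgeSet := K32.mem_edgeSet.mpr (k32_adj 2 0)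
  have c0 := hcol _ m0
  have c1 := hcol _ m1
  have c2 := hcol _ m2
  have d01 := hprop _ m0 _ m1 (by decide) ⟨Sum.inr 0, by simp, by simp⟩
  have d02 := hprop _ m0 _ m2 (by decide) ⟨Sum.inr 0, by simp, by simp⟩
  have d12 := hprop _ m1 _ m2 (by decide) ⟨Sum.inr 0, by simp, by simp⟩
  simp only [Set.mem_Icc] at c0 c1 c2
  omega

end K32Aux

def k32f : K32V → K32V → ℕ
  | .inl a, .inr b => ((a : ℕ) + (b : ℕ)) % 3 + 1
  | .inr b, .inl a => ((a : ℕ) + (b : ℕ)) % 3 + 1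
  | _, _ => 0

def k32φc : Sym2 K32V → ℕ := Sym2.lift ⟨k32f, by decide⟩

def k32g : K32V → K32V → ℕ
  | .inl a, .inr b => (a : ℕ) + (b : ℕ) + 1
  | .inr b, .inl a => (a : ℕ) + (b : ℕ) + 1
  | _, _ => 0

def k32φi : Sym2 K32V → ℕ := Sym2.lift ⟨k32g, by decide⟩

lemma k32_two_cyc {u v : ℕ} (hu1 : 1 ≤ u) (hu : u ≤ 3) (hv1 : 1 ≤ v) (hv : v ≤ 3)
    (huv : u ≠ v) : IsCyclicInterval 3 {u, v} := by
  refine ⟨u, by simp [Set.mem_Icc]; omega, v, by simp [Set.mem_Icc]; omega, ?_⟩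
  rcases Nat.lt_or_ge u v with h | h
  · by_cases hc : v = u + 1
    · left
      ext n
      simp only [Set.mem_insert_iff, Set.mem_singleton_iff, Set.mem_Icc]
      omega
    · right
      ext n
      simp only [Set.mem_insert_iff, Set.mem_singleton_iff, Set.mem_Icc, Set.mem_diff]
      omega
  · by_cases hc : u = v + 1
    · left
      ext n
      simp only [Set.mem_insert_iff, Set.mem_singleton_iff, Set.mem_Icc]
      omega
    · right
      ext n
      simp only [Set.mem_insert_iff, Set.mem_singleton_iff, Set.mem_Icc, Set.mem_diff]
      omega

lemma k32_cyc : IsCyclicIntervalColoring K32 3 k32φc := by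
  constructor
  · refine k32_proper_of _ _ ?_ ?_ ?_
    · simp only [Set.mem_Icc]; decide
    · decide
    · intro c hc
      rw [Set.mem_Icc] at hc
      obtain ⟨hc1, hc2⟩ := hc
      interval_cases c
      · exact ⟨s(.inl 0, .inr 0), K32.mem_edgeSet.mpr (k32_adj 0 0), rfl⟩
      · exact ⟨s(.inl 1, .inr 0), K32.mem_edgeSet.mpr (k32_adj 1 0), rfl⟩
      · exact ⟨s(.inl 2, .inr 0), K32.mem_edgeSet.mpr (k32_adj 2 0), rfl⟩
  · rintro (a | b) -
    · rw [k32_img_inl]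
      fin_cases a
      · show IsCyclicInterval 3 {1, 2}
        exact k32_two_cyc (by norm_num) (by norm_num) (by norm_num) (by norm_num) (by norm_num)
      · show IsCyclicInterval 3 {2, 3}
        exact k32_two_cyc (by norm_num) (by norm_num) (by norm_num) (by norm_num) (by norm_num)
      · show IsCyclicInterval 3 {3, 1}
        exact k32_two_cyc (by norm_num) (by norm_num) (by norm_num) (by norm_num) (by norm_num)
    · rw [k32_img_inr]
      refine ⟨1, by simp, 3, by simp, Or.inl ?_⟩
      fin_cases b
      · show ({1, 2, 3} : Set ℕ) = _
        ext n
        norm_num [Set.mem_Icc]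
        omega
      · show ({2, 3, 1} : Set ℕ) = _
        ext n
        norm_num [Set.mem_Icc]
        omega

lemma k32_no_int3 : ¬ ∃ φ, IsIntervalColoring K32 3 φ := by
  rintro ⟨φ, ⟨hcol, hprop, -⟩, hint⟩
  have key : ∀ a : Fin 3, ∃ b : Fin 2, φ s(.inl a, .inr b) = 2 := by
    intro a
    have m0 : s((Sum.inl a : K32V), Sum.inr 0) ∈ K32.edgeSet :=
      K32.mem_edgeSet.mpr (k32_adj a 0)
    have m1 : s((Sum.inl a : K32V), Sum.inr 1) ∈ K32.edgeSet :=
      K32.mem_edgeSet.mpr (k32_adj a 1)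
    have hne : s((Sum.inl a : K32V), Sum.inr 0) ≠ s((Sum.inl a : K32V), Sum.inr 1) := by
      simp [Sym2.eq_iff]
    have hd := hprop _ m0 _ m1 hne ⟨Sum.inl a, by simp, by simp⟩
    have c0 := hcol _ m0
    have c1 := hcol _ m1
    rw [Set.mem_Icc] at c0 c1
    obtain ⟨lo, hi, hpal⟩ := hint (.inl a)
      ⟨s(.inl a, .inr 0), (K32.mem_incidenceSet _ _).mpr (k32_adj a 0)⟩
    rw [k32_img_inl] at hpal
    have h0 : φ s((Sum.inl a : K32V), Sum.inr 0) ∈ Set.Icc lo hi := by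
      rw [← hpal]; exact Set.mem_insert _ _
    have h1 : φ s((Sum.inl a : K32V), Sum.inr 1) ∈ Set.Icc lo hi := by
      rw [← hpal]; exact Set.mem_insert_of_mem _ rfl
    rw [Set.mem_Icc] at h0 h1
    have h2 : (2 : ℕ) ∈ Set.Icc lo hi := by rw [Set.mem_Icc]; omega
    rw [← hpal, Set.mem_insert_iff, Set.mem_singleton_iff] at h2
    rcases h2 with h | h
    · exact ⟨0, h.symm⟩
    · exact ⟨1, h.symm⟩
  obtain ⟨b0, h0⟩ := key 0
  obtain ⟨b1, h1⟩ := key 1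
  obtain ⟨b2, h2⟩ := key 2
  have tri : b0 = b1 ∨ b0 = b2 ∨ b1 = b2 := by
    have : ∀ x y z : Fin 2, x = y ∨ x = z ∨ y = z := by decide
    exact this b0 b1 b2
  have bad : ∀ (a a' : Fin 3) (b : Fin 2), a ≠ a' →
      φ s(.inl a, .inr b) = 2 → φ s(.inl a', .inr b) = 2 → False := by
    intro a a' b haa ha ha'
    have ma : s((Sum.inl a : K32V), Sum.inr b) ∈ K32.edgeSet :=
      K32.mem_edgeSet.mpr (k32_adj a b)
    have ma' : s((Sum.inl a' : K32V), Sum.inr b) ∈ K32.edgeSet :=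
      K32.mem_edgeSet.mpr (k32_adj a' b)
    have hne : s((Sum.inl a : K32V), Sum.inr b) ≠ s((Sum.inl a' : K32V), Sum.inr b) := by
      simp [Sym2.eq_iff, haa]
    exact hprop _ ma _ ma' hne ⟨Sum.inr b, by simp, by simp⟩ (by rw [ha, ha'])
  rcases tri with h | h | h
  · exact bad 0 1 b1 (by decide) (h ▸ h0) h1
  · exact bad 0 2 b2 (by decide) (h ▸ h0) h2
  · exact bad 1 2 b2 (by decide) (h ▸ h1) h2

lemma k32_int4 : IsIntervalColoring K32 4 k32φi := by
  constructor
  · refine k32_proper_of _ _ ?_ ?_ ?_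
    · simp only [Set.mem_Icc]; decide
    · decide
    · intro c hc
      rw [Set.mem_Icc] at hc
      obtain ⟨hc1, hc2⟩ := hc
      interval_cases c
      · exact ⟨s(.inl 0, .inr 0), K32.mem_edgeSet.mpr (k32_adj 0 0), rfl⟩
      · exact ⟨s(.inl 1, .inr 0), K32.mem_edgeSet.mpr (k32_adj 1 0), rfl⟩
      · exact ⟨s(.inl 2, .inr 0), K32.mem_edgeSet.mpr (k32_adj 2 0), rfl⟩
      · exact ⟨s(.inl 2, .inr 1), K32.mem_edgeSet.mpr (k32_adj 2 1), rfl⟩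
  · rintro (a | b) -
    · rw [k32_img_inl]
      fin_cases a
      · show ∃ a b, ({1, 2} : Set ℕ) = Set.Icc a b
        exact ⟨1, 2, by ext n; norm_num [Set.mem_Icc]; omega⟩
      · show ∃ a b, ({2, 3} : Set ℕ) = Set.Icc a b
        exact ⟨2, 3, by ext n; norm_num [Set.mem_Icc]; omega⟩
      · show ∃ a b, ({3, 4} : Set ℕ) = Set.Icc a b
        exact ⟨3, 4, by ext n; norm_num [Set.mem_Icc]; omega⟩
    · rw [k32_img_inr]
      fin_cases b
      · show ∃ a b, ({1, 2, 3} : Set ℕ) = Set.Icc a b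
        exact ⟨1, 3, by ext n; norm_num [Set.mem_Icc]; omega⟩
      · show ∃ a b, ({2, 3, 4} : Set ℕ) = Set.Icc a b
        exact ⟨2, 4, by ext n; norm_num [Set.mem_Icc]; omega⟩
/-- `K_{3,2}` admits a cyclically-interval `3`-coloring but no interval `3`-coloring;
`w_cyc(K_{3,2}) = 3 < 4 = w_int(K_{3,2})`. -/
theorem stmt12 :
    (∃ φ, IsCyclicIntervalColoring (completeBipartiteGraph (Fin 3) (Fin 2)) 3 φ) ∧
    ¬(∃ φ, IsIntervalColoring (completeBipartiteGraph (Fin 3) (Fin 2)) 3 φ) ∧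
    wcyc (completeBipartiteGraph (Fin 3) (Fin 2)) = 3 ∧
    wint (completeBipartiteGraph (Fin 3) (Fin 2)) = 4 := by
  refine ⟨⟨k32φc, k32_cyc⟩, k32_no_int3, ?_, ?_⟩
  · apply le_antisymm
    · exact Nat.sInf_le ⟨k32φc, k32_cyc⟩
    · refine le_csInf ⟨3, k32φc, k32_cyc⟩ ?_
      rintro t ⟨φ, hφ, -⟩
      exact k32_three_le hφ
  · apply le_antisymm
    · exact Nat.sInf_le ⟨k32φi, k32_int4⟩
    · refine le_csInf ⟨4, k32φi, k32_int4⟩ ?_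
      rintro t ⟨φ, hφ⟩
      have h3 := k32_three_le hφ.1
      by_contra hlt
      push_neg at hlt
      have ht : t = 3 := by omega
      subst ht
      exact k32_no_int3 ⟨φ, hφ⟩
end

section
/- Every tree H with at least one edge admits a cyclically-interval t-coloring for every integer t with Δ(H) ≤ t ≤ M(H); in particular [Δ(H), M(H)] ⊆ Θ(H). -/
/-!
Root the tree at one end `u` of a path `p` attaining `M(H)` and label the edges by positive
integers, top-down: the edges at the root get `1, …, deg u`, and at any other vertex `x` whose
parent edge has label `ℓ` the child edges get `ℓ + 1, …, ℓ + deg x - 1`, so the labels at every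
vertex form an interval of length `deg x`. At each vertex of `p` the edge continuing along `p`
gets the largest label, so the last edge of `p` gets a label at least `|TP(p)| = M(H)`; and
since labels are produced top-down, every label below an occurring one occurs too. Reducing the
labels cyclically modulo `t` keeps the colouring proper (`deg x ≤ Δ(H) ≤ t`), turns each interval
into a cyclic interval, and uses all colours `1, …, t ≤ M(H)`.
-/

open SimpleGraph

def cyclicWrap (t n : ℕ) : ℕ := (n - 1) % t + 1

lemma cyclicWrap_mem_Icc {t : ℕ} (ht : 0 < t) (n : ℕ) : cyclicWrap t n ∈ Set.Icc 1 t :=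
  ⟨Nat.le_add_left _ _, Nat.succ_le_of_lt (Nat.mod_lt _ ht)⟩

lemma cyclicWrap_of_le {t n : ℕ} (hn : 1 ≤ n) (hnt : n ≤ t) : cyclicWrap t n = n := by
  rw [cyclicWrap, Nat.mod_eq_of_lt (by omega)]
  omega

lemma cyclicWrap_injOn {t a d : ℕ} (ha : 1 ≤ a) (hdt : d ≤ t) :
    Set.InjOn (cyclicWrap t) (Set.Ico a (a + d)) := by
  intro m hm n hn hmn
  wlog hlt : m < n generalizing m n
  · rcases (not_lt.1 hlt).eq_or_lt with h | h
    · exact h.symm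
    · exact (this hn hm hmn.symm h).symm
  simp only [Set.mem_Ico] at hm hn
  have hmod : (m - 1) % t = (n - 1) % t := by simpa [cyclicWrap] using hmn
  have hdvd : t ∣ (n - 1) - (m - 1) := (Nat.modEq_iff_dvd' (by omega)).1 hmod
  have := Nat.le_of_dvd (by omega) hdvd
  omega

lemma isCyclicInterval_cyclicWrap_image {t a d : ℕ} (ha : 1 ≤ a) (hd : 0 < d) (hdt : d ≤ t) :
    IsCyclicInterval t (cyclicWrap t '' Set.Ico a (a + d)) := by
  set r := (a - 1) % t with hr
  have hrt : r < t := Nat.mod_lt _ (by omega)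
  -- Shifting by `s < d ≤ t` from the residue `r` wraps around at most once.
  have hmem : ∀ y, y ∈ cyclicWrap t '' Set.Ico a (a + d) ↔
      ∃ s < d, y = if r + s < t then r + s + 1 else r + s + 1 - t := by
    intro y
    have hwrap : ∀ s < d, cyclicWrap t (a + s) =
        if r + s < t then r + s + 1 else r + s + 1 - t := by
      intro s hs
      have : (a + s - 1) % t = (r + s) % t := by
        rw [show a + s - 1 = a - 1 + s by omega, hr, Nat.mod_add_mod]
      rw [cyclicWrap, this]
      split_ifs with h
      · rw [Nat.mod_eq_of_lt h]
      · rw [Nat.mod_eq_sub_mod (by omega), Nat.mod_eq_of_lt (by omega)]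
        omega
    constructor
    · rintro ⟨n, hn, rfl⟩
      simp only [Set.mem_Ico] at hn
      exact ⟨n - a, by omega, by rw [← hwrap _ (by omega), Nat.add_sub_cancel' hn.1]⟩
    · rintro ⟨s, hs, rfl⟩
      exact ⟨a + s, by simp only [Set.mem_Ico]; omega, hwrap s hs⟩
  by_cases hfit : r + d ≤ t
  · refine ⟨r + 1, ⟨by omega, by omega⟩, r + d, ⟨by omega, hfit⟩, Or.inl ?_⟩
    rw [min_eq_left (by omega), max_eq_right (by omega)]
    ext y
    rw [hmem, Set.mem_Icc]
    constructor
    · rintro ⟨s, hs, rfl⟩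
      split_ifs <;> omega
    · intro hy
      exact ⟨y - r - 1, by omega, by rw [if_pos (by omega)]; omega⟩
  · refine ⟨r + 1, ⟨by omega, by omega⟩, r + d - t, ⟨by omega, by omega⟩, Or.inr ?_⟩
    rw [min_eq_right (by omega), max_eq_left (by omega)]
    ext y
    simp only [hmem, Set.mem_sdiff, Set.mem_Icc, Set.mem_insert_iff, Set.mem_singleton_iff]
    constructor
    · rintro ⟨s, hs, rfl⟩
      split_ifs <;> omega
    · intro hy
      by_cases hyr : r + 1 ≤ y
      · exact ⟨y - r - 1, by omega, by rw [if_pos (by omega)]; omega⟩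
      · exact ⟨y + t - r - 1, by omega, by rw [if_neg (by omega)]; omega⟩

section IntervalLabeling

variable {V : Type*} (G : SimpleGraph V) [G.LocallyFinite]

def IsIntervalLabeling (φ : Sym2 V → ℕ) : Prop :=
  ∀ x, Set.InjOn φ (G.incidenceSet x) ∧
    ∃ a, 1 ≤ a ∧ φ '' G.incidenceSet x = Set.Ico a (a + G.degree x)

variable {G}

theorem IsIntervalLabeling.isCyclicIntervalColoring {φ : Sym2 V → ℕ}
    (hφ : IsIntervalLabeling G φ) {t : ℕ} (hdeg : ∀ x, G.degree x ≤ t)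
    (hcov : Set.Icc 1 t ⊆ φ '' G.edgeSet) :
    IsCyclicIntervalColoring G t (cyclicWrap t ∘ φ) := by
  choose hinj a ha himage using hφ
  have hmem : ∀ x, ∀ e ∈ G.incidenceSet x, φ e ∈ Set.Ico (a x) (a x + G.degree x) :=
    fun x e he => himage x ▸ Set.mem_image_of_mem φ he
  have hpos : ∀ e ∈ G.edgeSet, 0 < t := by
    intro e he
    have hlabel := hmem _ e ⟨he, Sym2.out_fst_mem e⟩
    have := hdeg e.out.1
    simp only [Set.mem_Ico] at hlabel
    omega
  refine ⟨⟨fun e he => cyclicWrap_mem_Icc (hpos e he) _, ?_, ?_⟩, ?_⟩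
  · rintro e₁ he₁ e₂ he₂ hne ⟨x, hx₁, hx₂⟩ heq
    have hi₁ : e₁ ∈ G.incidenceSet x := ⟨he₁, hx₁⟩
    have hi₂ : e₂ ∈ G.incidenceSet x := ⟨he₂, hx₂⟩
    exact hne (hinj x hi₁ hi₂
      (cyclicWrap_injOn (ha x) (hdeg x) (hmem x _ hi₁) (hmem x _ hi₂) heq))
  · intro c hc
    obtain ⟨e, he, rfl⟩ := hcov hc
    exact ⟨e, he, cyclicWrap_of_le hc.1 hc.2⟩
  · rintro x ⟨e, he⟩
    have := hmem x e he
    simp only [Set.mem_Ico] at this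
    rw [Set.image_comp, himage]
    exact isCyclicInterval_cyclicWrap_image (ha x) (by omega) (hdeg x)

lemma IsIntervalLabeling.of_bijOn {φ : Sym2 V → ℕ} (h : ∀ x, ∃ a, 1 ≤ a ∧
      Set.BijOn (fun y => φ s(x, y)) (G.neighborSet x) (Set.Ico a (a + G.degree x))) :
    IsIntervalLabeling G φ := by
  intro x
  obtain ⟨a, ha, hbij⟩ := h x
  have himage : φ '' G.incidenceSet x = (fun y => φ s(x, y)) '' G.neighborSet x := by
    ext c
    constructor
    · rintro ⟨e, he, rfl⟩
      obtain ⟨y, rfl⟩ := Sym2.mem_iff_exists.1 he.2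
      exact ⟨y, G.mem_incidence_iff_neighbor.1 he, rfl⟩
    · rintro ⟨y, hy, rfl⟩
      exact ⟨s(x, y), G.mem_incidence_iff_neighbor.2 hy, rfl⟩
  refine ⟨?_, a, ha, himage.trans hbij.image_eq⟩
  intro e₁ he₁ e₂ he₂ heq
  obtain ⟨y₁, rfl⟩ := Sym2.mem_iff_exists.1 he₁.2
  obtain ⟨y₂, rfl⟩ := Sym2.mem_iff_exists.1 he₂.2
  rw [hbij.injOn (G.mem_incidence_iff_neighbor.1 he₁) (G.mem_incidence_iff_neighbor.1 he₂) heq]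

end IntervalLabeling

namespace SimpleGraph.Walk

variable {V : Type*} [DecidableEq V] {G : SimpleGraph V}

def nextVertex : ∀ {a b : V}, G.Walk a b → V → V
  | _, _, nil, y => y
  | a, _, cons (v := c) _ w, y => if y = a then c else w.nextVertex y

lemma IsPath.nextVertex_fst {a b : V} {w : G.Walk a b} (hw : w.IsPath) {d : G.Dart}
    (hd : d ∈ w.darts) : w.nextVertex d.fst = d.snd := by
  induction w with
  | nil => simp at hd
  | @cons a c b h w ih =>
    rw [cons_isPath_iff] at hw
    rw [darts_cons, List.mem_cons] at hd
    rcases hd with rfl | hd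
    · simp [nextVertex]
    · have hne : d.fst ≠ a := fun h => hw.2 (h ▸ w.dart_fst_mem_support_of_mem_darts hd)
      simp [nextVertex, hne, ih hw.1 hd]

end SimpleGraph.Walk

lemma pathTP_cons_subset {V : Type*} {H : SimpleGraph V} {u c v : V} (h : H.Adj u c)
    (p : H.Walk c v) :
    pathTP H (Walk.cons h p) ⊆ insert s(u, c) (⋃ d ∈ p.darts, H.incidenceSet d.fst) := by
  unfold pathTP
  split_ifs with hlen
  · cases p with
    | nil => simp
    | cons => simp at hlen
  · rintro e ⟨_, ⟨x, rfl⟩, hex⟩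
    simp only [Set.mem_iUnion, Set.mem_ofPred_eq] at hex
    obtain ⟨⟨hx, hxu, hxv⟩, hex⟩ := hex
    rw [Walk.support_cons, List.mem_cons, ← p.map_fst_darts_append, List.mem_append] at hx
    obtain ⟨d, hd, rfl⟩ : ∃ d ∈ p.darts, d.fst = x := by simpa [hxu, hxv] using hx
    exact Set.mem_insert_of_mem _ (Set.mem_iUnion₂.2 ⟨d, hd, hex⟩)

section PathTP

variable {V : Type*} [DecidableEq V] {H : SimpleGraph V} [H.LocallyFinite]

lemma finite_biUnion_darts_incidenceSet {a b : V} (w : H.Walk a b) :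
    (⋃ d ∈ w.darts, H.incidenceSet d.fst).Finite :=
  w.darts.finite_toSet.biUnion fun _ _ => Set.toFinite _

lemma ncard_incidenceSet (x : V) : (H.incidenceSet x).ncard = H.degree x := by
  rw [← card_incidenceFinset_eq_degree, incidenceFinset, Set.ncard_eq_toFinset_card']

-- Consecutive vertices of the walk share an edge, so each vertex adds at most `degree - 1` edges
-- not already counted.
lemma ncard_insert_biUnion_incidenceSet_le {a b : V} (w : H.Walk a b) {e : Sym2 V}
    (he : e ∈ H.incidenceSet a) :
    (insert e (⋃ d ∈ w.darts, H.incidenceSet d.fst)).ncard ≤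
      1 + (w.darts.map fun d => H.degree d.fst - 1).sum := by
  induction w generalizing e with
  | nil => simp
  | @cons a c b h w ih =>
    set U := ⋃ d ∈ w.darts, H.incidenceSet d.fst
    have hsub : insert e (⋃ d ∈ (Walk.cons h w).darts, H.incidenceSet d.fst) ⊆
        (H.incidenceSet a \ {s(a, c)}) ∪ insert s(a, c) U := by
      intro f hf
      simp only [Walk.darts_cons, List.mem_cons, Set.iUnion_iUnion_eq_or_left,
        Set.mem_insert_iff, Set.mem_union, Set.mem_sdiff, Set.mem_singleton_iff] at hf ⊢
      rcases hf with rfl | hf | hf <;> tauto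
    calc _ ≤ ((H.incidenceSet a \ {s(a, c)}) ∪ insert s(a, c) U).ncard :=
          Set.ncard_le_ncard hsub
            ((Set.toFinite _).union ((finite_biUnion_darts_incidenceSet w).insert _))
      _ ≤ (H.incidenceSet a \ {s(a, c)}).ncard + (insert s(a, c) U).ncard :=
          Set.ncard_union_le _ _
      _ ≤ (H.degree a - 1) + (1 + (w.darts.map fun d => H.degree d.fst - 1).sum) := by
          gcongr
          · rw [Set.ncard_sdiff_singleton_of_mem (show s(a, c) ∈ H.incidenceSet a from
              ⟨h, Sym2.mem_mk_left _ _⟩), ncard_incidenceSet]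
          · exact ih ⟨h, Sym2.mem_mk_right _ _⟩
      _ = _ := by
          rw [Walk.darts_cons, List.map_cons, List.sum_cons]
          ring

end PathTP

namespace RootedTree

variable {V : Type*} {H : SimpleGraph V} {u : V}

def parent (q : ∀ x, H.Path x u) (x : V) : V := (q x).1.getVert 1

variable {q : ∀ x, H.Path x u}

lemma eq_rootPath (hac : H.IsAcyclic) {x : V} (w : H.Walk x u) (hw : w.IsPath) :
    w = (q x).1 :=
  congrArg Subtype.val ((hac.subsingleton_path x u).elim ⟨w, hw⟩ (q x))

lemma parent_root (hac : H.IsAcyclic) : parent q u = u := by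
  rw [parent, ← eq_rootPath hac Walk.nil Walk.IsPath.nil, Walk.getVert_of_length_le _ (by simp)]

lemma rootPath_eq_cons (hac : H.IsAcyclic) {x : V} (hx : x ≠ u) :
    ∃ h : H.Adj x (parent q x), (q x).1 = Walk.cons h (q (parent q x)).1 := by
  obtain ⟨w, hadj, p, hp⟩ := Walk.exists_eq_cons_of_ne hx (q x).1
  have hpath := (q x).2
  rw [hp, Walk.cons_isPath_iff] at hpath
  have hw : parent q x = w := by rw [parent, hp, Walk.getVert_cons_succ, Walk.getVert_zero]
  rw [hw]
  exact ⟨hadj, by rw [hp, eq_rootPath hac p hpath.1]⟩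

lemma adj_parent (hac : H.IsAcyclic) {x : V} (hx : x ≠ u) : H.Adj x (parent q x) :=
  (rootPath_eq_cons hac hx).1

lemma length_rootPath_parent (hac : H.IsAcyclic) {x : V} (hx : x ≠ u) :
    (q (parent q x)).1.length < (q x).1.length := by
  obtain ⟨h, hcons⟩ := rootPath_eq_cons (q := q) hac hx
  rw [hcons, Walk.length_cons]
  exact Nat.lt_succ_self _

lemma ne_root_of_parent_eq (hac : H.IsAcyclic) {x y : V} (hadj : H.Adj x y)
    (h : parent q x = y) : x ≠ u := by
  rintro rfl
  exact hadj.ne ((parent_root (q := q) hac).symm.trans h)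

lemma eq_of_parent_eq_of_parent_eq (hac : H.IsAcyclic) {x y : V} (hxy : parent q x = y)
    (hyx : parent q y = x) : x = y := by
  by_contra hne
  have hx : x ≠ u := fun h => hne (by rw [← hxy, h, parent_root hac])
  have hy : y ≠ u := fun h => hne (by rw [← hyx, h, parent_root hac])
  have h₁ := length_rootPath_parent (q := q) hac hx
  have h₂ := length_rootPath_parent (q := q) hac hy
  rw [hxy] at h₁
  rw [hyx] at h₂
  omega

lemma parent_eq_or_parent_eq (hac : H.IsAcyclic) {x y : V} (h : H.Adj x y) :
    parent q x = y ∨ parent q y = x := by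
  classical
  by_cases hx : x ∈ (q y).1.support
  · right
    have hone : (q y).1.takeUntil x hx = Walk.cons h.symm Walk.nil :=
      congrArg Subtype.val ((hac.subsingleton_path y x).elim ⟨_, (q y).2.takeUntil hx⟩
        ⟨Walk.cons h.symm Walk.nil, by simp [Walk.isPath_def, h.ne']⟩)
    have hspec := (q y).1.take_spec hx
    rw [hone] at hspec
    rw [parent, ← hspec, Walk.cons_append, Walk.getVert_cons_succ, Walk.nil_append,
      Walk.getVert_zero]
  · left
    have hpath : (Walk.cons h (q y).1).IsPath := Walk.cons_isPath_iff _ _ |>.2 ⟨(q y).2, hx⟩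
    rw [parent, ← eq_rootPath hac _ hpath, Walk.getVert_cons_succ, Walk.getVert_zero]

lemma parent_snd_eq_fst_of_mem_darts (hac : H.IsAcyclic) {a b : V} {w : H.Walk a b}
    (hw : w.IsPath) (ha : parent q a ∉ w.support.tail) {d : H.Dart} (hd : d ∈ w.darts) :
    parent q d.snd = d.fst := by
  induction w with
  | nil => simp at hd
  | @cons a c b h w ih =>
    rw [Walk.cons_isPath_iff] at hw
    rw [Walk.support_cons, List.tail_cons] at ha
    have hc : parent q c = a :=
      (parent_eq_or_parent_eq hac h).resolve_left fun h' => ha (h' ▸ w.start_mem_support)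
    rw [Walk.darts_cons, List.mem_cons] at hd
    rcases hd with rfl | hd
    · exact hc
    · exact ih hw.1 (hc ▸ fun hmem => hw.2 (List.mem_of_mem_tail hmem)) hd

section Labeling

variable [DecidableEq V] [H.LocallyFinite] (q : ∀ x, H.Path x u) (pref : V → V)

def children (y : V) : Finset V := (H.neighborFinset y).filter (parent q · = y)

noncomputable def childEquiv (y : V) : children q y ≃ Fin (children q y).card :=
  if h : pref y ∈ children q y then
    (children q y).equivFin.trans (Equiv.swap ((children q y).equivFin ⟨pref y, h⟩)
      ⟨(children q y).card - 1, Nat.sub_lt (Finset.card_pos.2 ⟨_, h⟩) Nat.one_pos⟩)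
  else (children q y).equivFin

noncomputable def childSlot (y c : V) : ℕ :=
  if hc : c ∈ children q y then childEquiv q pref y ⟨c, hc⟩ else 0

-- The label of the edge from `x` to its parent; the root gets `1`, where its own block starts.
noncomputable def label (x : V) : ℕ :=
  1 + ((q x).1.darts.map fun d =>
    (if d.snd = u then 0 else 1) + childSlot q pref d.snd d.fst).sum

noncomputable def edgeLabel : Sym2 V → ℕ :=
  Sym2.lift ⟨fun a b => max (if parent q a = b then label q pref a else 0)
    (if parent q b = a then label q pref b else 0), fun _ _ => max_comm _ _⟩

variable {q pref}

lemma mem_children {y c : V} : c ∈ children q y ↔ H.Adj y c ∧ parent q c = y := by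
  rw [children, Finset.mem_filter, mem_neighborFinset]

lemma card_children_add (hac : H.IsAcyclic) (y : V) :
    (children q y).card + (if y = u then 0 else 1) = H.degree y := by
  split_ifs with hy
  · subst hy
    rw [add_zero, ← card_neighborFinset_eq_degree]
    congr 1
    ext c
    rw [mem_children, mem_neighborFinset, and_iff_left_iff_imp]
    intro hadj
    refine (parent_eq_or_parent_eq hac hadj).resolve_left fun h => hadj.ne ?_
    rw [← h, parent_root hac]
  · have hchildren : children q y = (H.neighborFinset y).erase (parent q y) := by
      ext c
      rw [mem_children, Finset.mem_erase, mem_neighborFinset]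
      constructor
      · rintro ⟨hadj, hc⟩
        exact ⟨fun h => hadj.ne (eq_of_parent_eq_of_parent_eq hac h.symm hc), hadj⟩
      · rintro ⟨hne, hadj⟩
        exact ⟨hadj, (parent_eq_or_parent_eq hac hadj).resolve_left (Ne.symm hne)⟩
    have hadj := adj_parent (q := q) hac hy
    rw [hchildren, Finset.card_erase_of_mem ((mem_neighborFinset _ _ _).2 hadj),
      card_neighborFinset_eq_degree]
    exact Nat.sub_add_cancel (H.degree_pos_iff_exists_adj y |>.2 ⟨_, hadj⟩)

lemma childSlot_lt {y c : V} (hc : c ∈ children q y) :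
    childSlot q pref y c < (children q y).card := by
  rw [childSlot, dif_pos hc]
  exact Fin.isLt _

lemma childSlot_injOn (y : V) : Set.InjOn (childSlot q pref y) (children q y) := by
  intro c₁ h₁ c₂ h₂ h
  simp only [childSlot, dif_pos (Finset.mem_coe.1 h₁), dif_pos (Finset.mem_coe.1 h₂)] at h
  exact congrArg Subtype.val ((childEquiv q pref y).injective (Fin.ext h))

lemma exists_childSlot_eq {y : V} {j : ℕ} (hj : j < (children q y).card) :
    ∃ c ∈ children q y, childSlot q pref y c = j := by
  set c := (childEquiv q pref y).symm ⟨j, hj⟩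
  refine ⟨c.1, c.2, ?_⟩
  rw [childSlot, dif_pos c.2]
  simp [c]

lemma childSlot_pref {y : V} (h : pref y ∈ children q y) :
    childSlot q pref y (pref y) = (children q y).card - 1 := by
  simp only [childSlot, dif_pos h, childEquiv, Equiv.trans_apply, Equiv.swap_apply_left]

lemma label_root (hac : H.IsAcyclic) : label q pref u = 1 := by
  rw [label, ← eq_rootPath hac Walk.nil Walk.IsPath.nil]
  rfl

lemma one_le_label (x : V) : 1 ≤ label q pref x := Nat.le_add_right _ _

lemma label_of_mem_children (hac : H.IsAcyclic) {y c : V} (hc : c ∈ children q y) :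
    label q pref c = label q pref y + ((if y = u then 0 else 1) + childSlot q pref y c) := by
  obtain ⟨hadj, rfl⟩ := mem_children.1 hc
  obtain ⟨h, hcons⟩ := rootPath_eq_cons (q := q) hac (ne_root_of_parent_eq hac hadj.symm rfl)
  simp only [label, hcons, Walk.darts_cons, List.map_cons, List.sum_cons]
  ring

lemma edgeLabel_of_parent_eq (hac : H.IsAcyclic) {x y : V} (hadj : H.Adj x y)
    (h : parent q x = y) : edgeLabel q pref s(x, y) = label q pref x := by
  rw [edgeLabel, Sym2.lift_mk]
  dsimp only
  rw [if_pos h,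
    if_neg fun h' => hadj.ne (eq_of_parent_eq_of_parent_eq hac h h'), max_eq_left (Nat.zero_le _)]

lemma bijOn_edgeLabel (hac : H.IsAcyclic) (x : V) :
    Set.BijOn (fun y => edgeLabel q pref s(x, y)) (H.neighborSet x)
      (Set.Ico (label q pref x) (label q pref x + H.degree x)) := by
  have hdeg := card_children_add (q := q) hac x
  have hcases : ∀ y ∈ H.neighborSet x,
      (parent q x = y ∧ x ≠ u ∧ edgeLabel q pref s(x, y) = label q pref x) ∨
      (y ∈ children q x ∧ edgeLabel q pref s(x, y) =
        label q pref x + ((if x = u then 0 else 1) + childSlot q pref x y)) := by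
    intro y hadj
    rcases parent_eq_or_parent_eq hac hadj with h | h
    · exact Or.inl ⟨h, ne_root_of_parent_eq hac hadj h, edgeLabel_of_parent_eq hac hadj h⟩
    · refine Or.inr ⟨mem_children.2 ⟨hadj, h⟩, ?_⟩
      rw [Sym2.eq_swap, edgeLabel_of_parent_eq hac hadj.symm h,
        label_of_mem_children hac (mem_children.2 ⟨hadj, h⟩)]
  refine ⟨?_, ?_, ?_⟩
  · intro y hy
    rcases hcases y hy with ⟨-, hx, hlabel⟩ | ⟨hc, hlabel⟩ <;>
      simp only [Set.mem_Ico, hlabel]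
    · rw [if_neg hx] at hdeg
      omega
    · have := childSlot_lt (pref := pref) hc
      omega
  · intro y₁ hy₁ y₂ hy₂ heq
    simp only at heq
    rcases hcases y₁ hy₁ with ⟨rfl, hx₁, h₁⟩ | ⟨hc₁, h₁⟩ <;>
      rcases hcases y₂ hy₂ with ⟨rfl, hx₂, h₂⟩ | ⟨hc₂, h₂⟩
    · rfl
    · rw [h₁, h₂, if_neg hx₁] at heq
      omega
    · rw [h₁, h₂, if_neg hx₂] at heq
      omega
    · rw [h₁, h₂] at heq
      exact childSlot_injOn (pref := pref) x hc₁ hc₂ (by omega)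
  · rintro j ⟨hj₁, hj₂⟩
    by_cases hpar : x ≠ u ∧ j = label q pref x
    · exact ⟨parent q x, adj_parent hac hpar.1,
        (edgeLabel_of_parent_eq hac (adj_parent hac hpar.1) rfl).trans hpar.2.symm⟩
    · have hoff : (if x = u then 0 else 1) ≤ j - label q pref x := by
        split_ifs with hx
        · exact Nat.zero_le _
        · have : j ≠ label q pref x := fun h => hpar ⟨hx, h⟩
          omega
      obtain ⟨c, hc, hslot⟩ := exists_childSlot_eq (pref := pref)
        (show j - label q pref x - (if x = u then 0 else 1) < (children q x).card by omega)
      obtain ⟨hadj, hcx⟩ := mem_children.1 hc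
      refine ⟨c, hadj, ?_⟩
      rcases hcases c hadj with ⟨hxc, -, -⟩ | ⟨-, hlabel⟩
      · exact absurd (eq_of_parent_eq_of_parent_eq hac hxc hcx) hadj.ne
      · show edgeLabel q pref s(x, c) = j
        omega

theorem isIntervalLabeling_edgeLabel (hac : H.IsAcyclic) :
    IsIntervalLabeling H (edgeLabel q pref) :=
  IsIntervalLabeling.of_bijOn fun x => ⟨_, one_le_label x, bijOn_edgeLabel hac x⟩

theorem Icc_label_subset_image (hac : H.IsAcyclic) {x : V} (hx : x ≠ u) :
    Set.Icc 1 (label q pref x) ⊆ edgeLabel q pref '' H.edgeSet := by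
  induction hlen : (q x).1.length using Nat.strong_induction_on generalizing x with
  | _ n ih =>
    set y := parent q x
    have hadj : H.Adj y x := (adj_parent hac hx).symm
    have hblock : Set.Ico (label q pref y) (label q pref y + H.degree y) ⊆
        edgeLabel q pref '' H.edgeSet := by
      intro j hj
      obtain ⟨z, hz, hzj⟩ := (bijOn_edgeLabel hac y).surjOn hj
      exact ⟨s(y, z), hz, hzj⟩
    have hx_mem := (bijOn_edgeLabel (q := q) (pref := pref) hac y).mapsTo hadj
    simp only [Set.mem_Ico] at hx_mem
    rw [Sym2.eq_swap, edgeLabel_of_parent_eq hac hadj.symm rfl] at hx_mem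
    rintro j ⟨hj₁, hj₂⟩
    by_cases hjy : label q pref y ≤ j
    · exact hblock ⟨hjy, by omega⟩
    · have hy : y ≠ u := by
        intro h
        rw [h, label_root hac] at hjy
        omega
      exact ih _ (hlen ▸ length_rootPath_parent hac hx) hy rfl ⟨hj₁, by omega⟩

lemma label_pref (hac : H.IsAcyclic) {y : V} (h : pref y ∈ children q y) :
    label q pref (pref y) = label q pref y + (H.degree y - 1) := by
  have hdeg := card_children_add (q := q) hac y
  have hpos : 0 < (children q y).card := Finset.card_pos.2 ⟨_, h⟩
  rw [label_of_mem_children hac h, childSlot_pref h]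
  split_ifs at hdeg ⊢ <;> omega

lemma label_eq_add_sum (hac : H.IsAcyclic) {a b : V} (w : H.Walk a b)
    (hw : ∀ d ∈ w.darts, parent q d.snd = d.fst ∧ pref d.fst = d.snd) :
    label q pref b = label q pref a + (w.darts.map fun d => H.degree d.fst - 1).sum := by
  induction w with
  | nil => simp
  | @cons a c b h w ih =>
    obtain ⟨hpar, hpref⟩ := hw _ List.mem_cons_self
    have hstep := label_pref hac (hpref ▸ mem_children.2 ⟨h, hpar⟩ : pref a ∈ children q a)
    simp only at hpref
    rw [hpref] at hstep
    rw [ih fun d hd => hw d (List.mem_cons_of_mem _ hd), hstep, Walk.darts_cons, List.map_cons,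
      List.sum_cons]
    ring

-- Since `p` always continues through the last slot, its last edge has label at least `|TP(p)|`.
theorem Icc_ncard_pathTP_subset_image (hac : H.IsAcyclic) {v : V} {p : H.Walk u v} (hp : p.IsPath) :
    Set.Icc 1 (pathTP H p).ncard ⊆ edgeLabel q p.nextVertex '' H.edgeSet := by
  cases p with
  | nil => simp [pathTP]
  | @cons _ c _ h p' =>
    have hnodup := hp.support_nodup
    rw [Walk.support_cons, List.nodup_cons] at hnodup
    have hv : v ≠ u := fun hvu => hnodup.1 (hvu ▸ p'.end_mem_support)
    have hdarts : ∀ d ∈ p'.darts,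
        parent q d.snd = d.fst ∧ (Walk.cons h p').nextVertex d.fst = d.snd := fun d hd =>
      have hd' : d ∈ (Walk.cons h p').darts := List.mem_cons_of_mem _ hd
      ⟨parent_snd_eq_fst_of_mem_darts hac hp (by rw [parent_root hac]; exact hnodup.1) hd',
        hp.nextVertex_fst hd'⟩
    have hle : (pathTP H (Walk.cons h p')).ncard ≤ label q (Walk.cons h p').nextVertex v :=
      calc _ ≤ (insert s(u, c) (⋃ d ∈ p'.darts, H.incidenceSet d.fst)).ncard :=
            Set.ncard_le_ncard (pathTP_cons_subset h p')
              ((finite_biUnion_darts_incidenceSet p').insert _)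
        _ ≤ 1 + (p'.darts.map fun d => H.degree d.fst - 1).sum :=
            ncard_insert_biUnion_incidenceSet_le p' ⟨h, Sym2.mem_mk_right _ _⟩
        _ ≤ label q _ c + (p'.darts.map fun d => H.degree d.fst - 1).sum :=
            Nat.add_le_add_right (one_le_label c) _
        _ = _ := (label_eq_add_sum hac p' hdarts).symm
    exact (Set.Icc_subset_Icc_right hle).trans (Icc_label_subset_image hac hv)

end Labeling

end RootedTree

lemma exists_isPath_ncard_pathTP_eq_treeM {V : Type*} [Finite V] [Nonempty V]
    (G : SimpleGraph V) :
    ∃ (u v : V) (p : G.Walk u v), p.IsPath ∧ (pathTP G p).ncard = treeM G := by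
  have hne : {n | ∃ (u v : V) (p : G.Walk u v), p.IsPath ∧ (pathTP G p).ncard = n}.Nonempty :=
    let x := Classical.arbitrary V
    ⟨_, x, x, Walk.nil, Walk.IsPath.nil, rfl⟩
  have hbdd : BddAbove {n | ∃ (u v : V) (p : G.Walk u v), p.IsPath ∧ (pathTP G p).ncard = n} :=
    ⟨Nat.card (Sym2 V), by rintro _ ⟨u, v, p, -, rfl⟩; exact Set.ncard_le_card _⟩
  exact Nat.sSup_mem hne hbdd

theorem stmt15_general {V : Type*} [Fintype V] (H : SimpleGraph V) [DecidableRel H.Adj]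
    (hH : H.IsTree) (t : ℕ)
    (h1 : H.maxDegree ≤ t) (h2 : t ≤ treeM H) :
    ∃ φ, IsCyclicIntervalColoring H t φ := by
  classical
  have : Nonempty V := hH.connected.nonempty
  obtain ⟨u, v, p, hp, hpM⟩ := exists_isPath_ncard_pathTP_eq_treeM H
  let q : ∀ x, H.Path x u := fun x => (hH.connected.preconnected x u).some.toPath
  have hcov : Set.Icc 1 t ⊆ RootedTree.edgeLabel q p.nextVertex '' H.edgeSet :=
    (Set.Icc_subset_Icc_right (h2.trans hpM.ge)).trans
      (RootedTree.Icc_ncard_pathTP_subset_image hH.isAcyclic hp)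
  exact ⟨_, (RootedTree.isIntervalLabeling_edgeLabel hH.isAcyclic).isCyclicIntervalColoring
    (fun x => (H.degree_le_maxDegree x).trans h1) hcov⟩

/-- Every tree `H` with an edge admits a cyclically-interval `t`-coloring for each
`t ∈ [Δ(H), M(H)]`. -/
theorem stmt15 {V : Type*} [Fintype V] [DecidableEq V] (H : SimpleGraph V) [DecidableRel H.Adj]
    (hH : H.IsTree) (hE : H.edgeSet.Nonempty) (t : ℕ)
    (h1 : H.maxDegree ≤ t) (h2 : t ≤ treeM H) :
    ∃ φ, IsCyclicIntervalColoring H t φ :=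
  stmt15_general H hH t h1 h2
end
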